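/- arXiv:2008.11931 — 2 statements merged into one kernel-verified Lean document; each statement's English description precedes it below -/
import Mathlib

section
/- Let l_{q0}, l_q > 0 with l_q > l_{q0}, let T_c ≥ l_q and u > 0. Let T be uniformly distributed on [−T_c, T_c] and let h(T) be the collision overlap function: h(T) = (l_{q0} − T)/l_{q0} for 0 ≤ T ≤ l_{q0}; h(T) = 1 for l_{q0} − l_q ≤ T ≤ 0; h(T) = (l_q + T)/l_{q0} for −l_q ≤ T ≤ l_{q0} − l_q; h(T) = 0 otherwise. Then E[ 1 / (1 + u·h(T)) ] = 1 − (l_{q0} + l_q)/(2 T_c) + (l_{q0}/(T_c u)) · log(1 + u) − (l_{q0} − l_q)/(2 T_c (1 + u)). -/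
/-!
The overlap `h` is the trapezoid `max 0 (min l0 (min (l0 - t) (lq + t))) / l0`, so the integrand
is continuous and the integral splits at the kinks `-lq, l0 - lq, 0, l0`. Off the support the
integrand is `1`, on the plateau it is `1 / (1 + u)`, and an affine change of variables turns
each of the two ramps of width `l0` into `l0 * ∫ s in 0..1, 1 / (1 + u * s)`, which equals
`l0 * log (1 + u) / u`.
-/

open MeasureTheory Set Real intervalIntegral

theorem integral_comp_ramp_up (f : ℝ → ℝ) (a b : ℝ) :
    ∫ t in a..b, f ((t - a) / (b - a)) = (b - a) * ∫ s in (0 : ℝ)..1, f s := by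
  rcases eq_or_ne b a with rfl | hab
  · simp
  have hba : b - a ≠ 0 := sub_ne_zero.mpr hab
  simp_rw [sub_div _ a]
  rw [integral_comp_div_sub f hba, sub_self, div_sub_div_same, div_self hba, smul_eq_mul]

theorem integral_comp_ramp_down (f : ℝ → ℝ) (a b : ℝ) :
    ∫ t in a..b, f ((b - t) / (b - a)) = (b - a) * ∫ s in (0 : ℝ)..1, f s := by
  have reflect :=
    integral_comp_sub_left (a := a) (b := b) (fun t => f ((t - a) / (b - a))) (b + a)
  simp only [add_sub_cancel_left, add_sub_cancel_right, sub_right_comm _ _ a] at reflect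
  rw [← integral_comp_ramp_up, ← reflect]

theorem integral_one_div_one_add_mul_unitInterval {u : ℝ} (hu : u ≠ 0) (hu1 : 0 < 1 + u) :
    ∫ s in (0 : ℝ)..1, 1 / (1 + u * s) = log (1 + u) / u := by
  simp only [one_div]
  rw [integral_comp_add_mul (fun x => x⁻¹) hu, mul_zero, add_zero, mul_one,
    integral_inv_of_pos one_pos hu1, div_one, smul_eq_mul, inv_mul_eq_div]

noncomputable def collisionOverlap (l0 lq t : ℝ) : ℝ :=
  if 0 ≤ t ∧ t ≤ l0 then (l0 - t) / l0
  else if l0 - lq ≤ t ∧ t ≤ 0 then 1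
  else if -lq ≤ t ∧ t ≤ l0 - lq then (lq + t) / l0
  else 0

section collisionOverlap

variable {l0 lq t : ℝ}

theorem collisionOverlap_eq_clamp (hl0 : 0 < l0) (hlq : l0 ≤ lq) (t : ℝ) :
    collisionOverlap l0 lq t = max 0 (min l0 (min (l0 - t) (lq + t))) / l0 := by
  unfold collisionOverlap
  split_ifs with h1 h2 h3
  · rw [min_eq_right (by grind), min_eq_left (by grind), max_eq_right (by grind)]
  · rw [min_eq_left (by grind), max_eq_right hl0.le, div_self hl0.ne']
  · rw [min_eq_right (by grind), min_eq_right (by grind), max_eq_right (by grind)]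
  · rw [max_eq_left (by grind), zero_div]

theorem continuous_collisionOverlap (hl0 : 0 < l0) (hlq : l0 ≤ lq) :
    Continuous (collisionOverlap l0 lq) := by
  rw [funext (collisionOverlap_eq_clamp hl0 hlq)]
  fun_prop

theorem collisionOverlap_mem_Icc (hl0 : 0 < l0) (hlq : l0 ≤ lq) (t : ℝ) :
    collisionOverlap l0 lq t ∈ Icc 0 1 := by
  rw [collisionOverlap_eq_clamp hl0 hlq]
  exact ⟨by positivity, (div_le_one hl0).mpr (max_le hl0.le (min_le_left _ _))⟩

theorem collisionOverlap_of_le_neg (hl0 : 0 < l0) (hlq : l0 ≤ lq) (ht : t ≤ -lq) :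
    collisionOverlap l0 lq t = 0 := by
  rw [collisionOverlap_eq_clamp hl0 hlq, min_eq_right (by grind), min_eq_right (by grind),
    max_eq_left (by grind), zero_div]

theorem collisionOverlap_of_mem_rise (hl0 : 0 < l0) (hlq : l0 ≤ lq)
    (ht : t ∈ Icc (-lq) (l0 - lq)) :
    collisionOverlap l0 lq t = (t + lq) / l0 := by
  rw [collisionOverlap_eq_clamp hl0 hlq, min_eq_right (by grind), min_eq_right (by grind),
    max_eq_right (by grind), add_comm]

theorem collisionOverlap_of_mem_plateau (hl0 : 0 < l0) (hlq : l0 ≤ lq)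
    (ht : t ∈ Icc (l0 - lq) 0) :
    collisionOverlap l0 lq t = 1 := by
  rw [collisionOverlap_eq_clamp hl0 hlq, min_eq_left (by grind), max_eq_right hl0.le,
    div_self hl0.ne']

theorem collisionOverlap_of_mem_fall (hl0 : 0 < l0) (hlq : l0 ≤ lq) (ht : t ∈ Icc 0 l0) :
    collisionOverlap l0 lq t = (l0 - t) / l0 := by
  rw [collisionOverlap_eq_clamp hl0 hlq, min_eq_right (by grind), min_eq_left (by grind),
    max_eq_right (by grind)]

theorem collisionOverlap_of_le (hl0 : 0 < l0) (hlq : l0 ≤ lq) (ht : l0 ≤ t) :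
    collisionOverlap l0 lq t = 0 := by
  rw [collisionOverlap_eq_clamp hl0 hlq, min_eq_right (by grind), min_eq_left (by grind),
    max_eq_left (by grind), zero_div]

theorem continuous_one_div_one_add_mul_collisionOverlap (hl0 : 0 < l0) (hlq : l0 ≤ lq)
    {u : ℝ} (hu1 : 0 < 1 + u) :
    Continuous fun t => 1 / (1 + u * collisionOverlap l0 lq t) := by
  have := continuous_collisionOverlap hl0 hlq
  refine continuous_const.div (by fun_prop) fun t => ?_
  obtain ⟨h0, h1⟩ := collisionOverlap_mem_Icc hl0 hlq t
  rcases h1.eq_or_lt with h_eq | h_lt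
  · rw [h_eq]; linarith
  · nlinarith [mul_nonneg h0 hu1.le]

end collisionOverlap

theorem integral_one_div_one_add_mul_collisionOverlap {l0 lq T u : ℝ} (hl0 : 0 < l0)
    (hlq : l0 ≤ lq) (hT : lq ≤ T) (hu : u ≠ 0) (hu1 : 0 < 1 + u) :
    ∫ t in -T..T, 1 / (1 + u * collisionOverlap l0 lq t) =
      2 * T - (l0 + lq) + 2 * l0 * (log (1 + u) / u) + (lq - l0) / (1 + u) := by
  set g : ℝ → ℝ := fun t => 1 / (1 + u * collisionOverlap l0 lq t)
  have hg : ∀ a b, IntervalIntegrable g volume a b :=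
    (continuous_one_div_one_add_mul_collisionOverlap hl0 hlq hu1).intervalIntegrable
  have congr_on {a b : ℝ} (hab : a ≤ b) {φ : ℝ → ℝ}
      (hφ : ∀ t ∈ Icc a b, g t = φ t) :
      ∫ t in a..b, g t = ∫ t in a..b, φ t :=
    integral_congr (by rwa [uIcc_of_le hab])
  have left : ∫ t in -T..-lq, g t = T - lq := by
    rw [congr_on (by linarith) (φ := fun _ => 1)
      fun t ht => by simp [g, collisionOverlap_of_le_neg hl0 hlq ht.2],
      intervalIntegral.integral_const, smul_eq_mul, mul_one]
    ring
  have rise : ∫ t in -lq..l0 - lq, g t = l0 * (log (1 + u) / u) := by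
    rw [congr_on (by linarith) (φ := fun t => 1 / (1 + u * ((t - -lq) / (l0 - lq - -lq))))
      fun t ht => by simp only [g, collisionOverlap_of_mem_rise hl0 hlq ht]; ring,
      integral_comp_ramp_up (fun s => 1 / (1 + u * s)),
      integral_one_div_one_add_mul_unitInterval hu hu1]
    ring
  have plateau : ∫ t in l0 - lq..0, g t = (lq - l0) / (1 + u) := by
    rw [congr_on (by linarith) (φ := fun _ => 1 / (1 + u))
      fun t ht => by simp [g, collisionOverlap_of_mem_plateau hl0 hlq ht],
      intervalIntegral.integral_const, smul_eq_mul]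
    ring
  have fall : ∫ t in 0..l0, g t = l0 * (log (1 + u) / u) := by
    rw [congr_on hl0.le (φ := fun t => 1 / (1 + u * ((l0 - t) / (l0 - 0))))
      fun t ht => by simp only [g, collisionOverlap_of_mem_fall hl0 hlq ht, sub_zero],
      integral_comp_ramp_down (fun s => 1 / (1 + u * s)),
      integral_one_div_one_add_mul_unitInterval hu hu1, sub_zero]
  have right : ∫ t in l0..T, g t = T - l0 := by
    rw [congr_on (by linarith) (φ := fun _ => 1)
      fun t ht => by simp [g, collisionOverlap_of_le hl0 hlq ht.1],
      intervalIntegral.integral_const, smul_eq_mul, mul_one]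
  rw [← integral_add_adjacent_intervals (hg (-T) (-lq)) (hg _ T),
    ← integral_add_adjacent_intervals (hg (-lq) (l0 - lq)) (hg _ T),
    ← integral_add_adjacent_intervals (hg (l0 - lq) 0) (hg _ T),
    ← integral_add_adjacent_intervals (hg 0 l0) (hg _ T),
    left, rise, plateau, fall, right]
  ring

theorem stmt_4_general (l0 lq Tc u : ℝ) (hl0 : 0 < l0) (hlt : l0 < lq)
    (hTc : lq ≤ Tc) (hu : 0 < u)
    (h : ℝ → ℝ)
    (hdef : ∀ t : ℝ,
      h t = if 0 ≤ t ∧ t ≤ l0 then (l0 - t) / l0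
            else if l0 - lq ≤ t ∧ t ≤ 0 then 1
            else if -lq ≤ t ∧ t ≤ l0 - lq then (lq + t) / l0
            else 0) :
    (1 / (2 * Tc)) * ∫ t in Icc (-Tc) Tc, 1 / (1 + u * h t) =
      1 - (l0 + lq) / (2 * Tc) + (l0 / (Tc * u)) * Real.log (1 + u)
        - (l0 - lq) / (2 * Tc * (1 + u)) := by
  obtain rfl : h = collisionOverlap l0 lq := funext hdef
  have hTc0 : 0 < Tc := hl0.trans (hlt.trans_le hTc)
  rw [integral_Icc_eq_integral_Ioc, ← integral_of_le (by linarith),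
    integral_one_div_one_add_mul_collisionOverlap hl0 hlt.le hTc hu.ne' (by linarith)]
  field_simp
  ring

theorem stmt_4 (l0 lq Tc u : ℝ) (hl0 : 0 < l0) (hlq : 0 < lq) (hlt : l0 < lq)
    (hTc : lq ≤ Tc) (hu : 0 < u)
    (h : ℝ → ℝ)
    (hdef : ∀ t : ℝ,
      h t = if 0 ≤ t ∧ t ≤ l0 then (l0 - t) / l0
            else if l0 - lq ≤ t ∧ t ≤ 0 then 1
            else if -lq ≤ t ∧ t ≤ l0 - lq then (lq + t) / l0
            else 0) :
    (1 / (2 * Tc)) * ∫ t in Icc (-Tc) Tc, 1 / (1 + u * h t) =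
      1 - (l0 + lq) / (2 * Tc) + (l0 / (Tc * u)) * Real.log (1 + u)
        - (l0 - lq) / (2 * Tc * (1 + u)) :=
  stmt_4_general l0 lq Tc u hl0 hlt hTc hu h hdef
end

section
/- Under perfect SF orthogonality (only co-SF interference, q = q0, so l_q = l_{q0} and P_q = P_{q0}), the collision-overlap expectation of Corollary 1 simplifies: for u > 0, T_c ≥ l_{q0}, (1/(2T_c))∫_{−T_c}^{T_c} 1/(1 + u h(t)) dt = 1 − l_{q0}/T_c + (l_{q0}/(T_c u)) log(1 + u). -/
/-!
For equal durations the overlap is the triangle function `h(t) = (1 - |t|/l)₊`, so the integrand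
is even and equals `1` for `|t| ≥ l`. On `[0, l]` it is `1 / (1 + u (l - t) / l)`, an affine
substitution of `1 / x`, whose integral is `(l / u) log (1 + u)`.
-/

open MeasureTheory Set

noncomputable def overlap (l0 lq T : ℝ) : ℝ :=
  (volume (Icc T (T + lq) ∩ Icc 0 l0)).toReal / l0

open Real intervalIntegral

theorem intervalIntegral.integral_neg_self_eq_two_smul_of_even {E : Type*} [NormedAddCommGroup E]
    [NormedSpace ℝ E] {f : ℝ → E} {a : ℝ} (heven : ∀ x, f (-x) = f x)
    (hf : IntervalIntegrable f volume (-a) a) :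
    ∫ x in -a..a, f x = (2 : ℝ) • ∫ x in 0..a, f x := by
  have hneg : IntervalIntegrable f volume (-a) 0 :=
    hf.mono_set (uIcc_subset_uIcc left_mem_uIcc (by simp [mem_uIcc]; grind))
  have hpos : IntervalIntegrable f volume 0 a :=
    hf.mono_set (uIcc_subset_uIcc (by simp [mem_uIcc]; grind) right_mem_uIcc)
  have hreflect : ∫ x in -a..0, f x = ∫ x in 0..a, f x := by
    simpa [heven] using (integral_comp_neg (a := 0) (b := a) f).symm
  rw [← integral_add_adjacent_intervals hneg hpos, hreflect, two_smul]

theorem integral_one_div_one_add_mul_sub_div {l u : ℝ} (hl : l ≠ 0) (hu : -1 < u)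
    (hu0 : u ≠ 0) :
    ∫ t in 0..l, 1 / (1 + u * ((l - t) / l)) = l / u * log (1 + u) := by
  have hlin : ∀ t, 1 + u * ((l - t) / l) = -(u / l) * t + (1 + u) := fun t => by
    field_simp; ring
  simp_rw [hlin]
  rw [integral_comp_mul_add (fun x => 1 / x) (by simp [hl, hu0]), integral_one_div]
  · simp only [mul_zero, zero_add, smul_eq_mul]
    rw [show -(u / l) * l + (1 + u) = 1 by field_simp; ring, one_div, log_inv]
    field_simp
  · simp only [mul_zero, zero_add, show -(u / l) * l + (1 + u) = 1 by field_simp; ring, mem_uIcc]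
    grind

theorem overlap_nonneg {l0 : ℝ} (hl0 : 0 ≤ l0) (lq T : ℝ) : 0 ≤ overlap l0 lq T :=
  div_nonneg ENNReal.toReal_nonneg hl0

theorem overlap_self (l t : ℝ) : overlap l l t = max 0 (l - |t|) / l := by
  have hlen : min (t + l) l - max t 0 = l - |t| := by
    rcases le_total 0 t with ht | ht
    · simp [ht, abs_of_nonneg ht]
    · simp [ht, abs_of_nonpos ht]; ring
  rw [overlap, Icc_inter_Icc, Real.volume_Icc, ENNReal.toReal_ofReal', hlen, max_comm]

theorem overlap_self_neg (l t : ℝ) : overlap l l (-t) = overlap l l t := by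
  simp only [overlap_self, abs_neg]

theorem overlap_self_of_mem_Icc {l t : ℝ} (ht : t ∈ Icc 0 l) : overlap l l t = (l - t) / l := by
  rw [overlap_self, abs_of_nonneg ht.1, max_eq_right (by linarith [ht.2])]

theorem overlap_self_of_le {l t : ℝ} (hl : 0 ≤ l) (ht : l ≤ t) : overlap l l t = 0 := by
  rw [overlap_self, abs_of_nonneg (hl.trans ht), max_eq_left (by linarith), zero_div]

theorem continuous_overlap_self (l : ℝ) : Continuous (overlap l l) := by
  simp_rw [funext (overlap_self l)]
  fun_prop

theorem stmt_12 (l0 Tc u : ℝ) (hl0 : 0 < l0) (hTc : l0 ≤ Tc) (hu : 0 < u) :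
    (1 / (2 * Tc)) * ∫ t in Icc (-Tc) Tc, 1 / (1 + u * overlap l0 l0 t) =
      1 - l0 / Tc + (l0 / (Tc * u)) * Real.log (1 + u) := by
  have hTc0 : Tc ≠ 0 := (hl0.trans_le hTc).ne'
  set g : ℝ → ℝ := fun t => 1 / (1 + u * overlap l0 l0 t)
  have hg : Continuous g :=
    continuous_const.div (continuous_const.add (continuous_const.mul (continuous_overlap_self l0)))
      fun t => (by nlinarith [overlap_nonneg hl0.le l0 t] : 0 < 1 + u * overlap l0 l0 t).ne'
  have hpeak : ∫ t in 0..l0, g t = l0 / u * log (1 + u) := by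
    rw [integral_congr (g := fun t => 1 / (1 + u * ((l0 - t) / l0))) fun t ht => by
      rw [uIcc_of_le hl0.le] at ht; simp only [g, overlap_self_of_mem_Icc ht]]
    exact integral_one_div_one_add_mul_sub_div hl0.ne' (by linarith) hu.ne'
  have htail : ∫ t in l0..Tc, g t = Tc - l0 := by
    rw [integral_congr (g := fun _ => (1 : ℝ)) fun t ht => by
      rw [uIcc_of_le hTc] at ht; simp [g, overlap_self_of_le hl0.le ht.1]]
    simp
  rw [integral_Icc_eq_integral_Ioc, ← integral_of_le (by linarith),
    integral_neg_self_eq_two_smul_of_even (fun t => by simp only [g, overlap_self_neg])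
      (hg.intervalIntegrable _ _),
    ← integral_add_adjacent_intervals (hg.intervalIntegrable 0 l0) (hg.intervalIntegrable l0 Tc),
    hpeak, htail, smul_eq_mul]
  field_simp
  ring
end
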